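/- arXiv:0808.2878 — 2 statements merged into one kernel-verified Lean document; each statement's English description precedes it below -/
import Mathlib

section
/- Let 0 < θ₀ < 1. For all j, k, l ∈ 𝒵_L with j₃k₃ ≠ 0, j' ≠ 0, k' ≠ 0, l = j + k and l' ≠ 0, and all r, s ∈ {−1,+1}: if |ω_j^r + ω_k^s| ≤ θ₀ |ω_j^r − ω_k^s| (a near resonance on the resonance cone), then |B_{jkl}^{rs0} + B_{kjl}^{sr0}| ≤ (|M|/2)(4 + 6/(1 − θ₀²)) (|j||k|/|l|) |ω_j^r + ω_k^s|. -/
noncomputable section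
open scoped Classical

abbrev V3 := Fin 3 → ℝ

/-- Euclidean norm of a vector in ℝ³. -/
def euclNorm (k : V3) : ℝ := Real.sqrt (k 0 ^ 2 + k 1 ^ 2 + k 2 ^ 2)

/-- Horizontal part k' = (k₁, k₂, 0). -/
def horiz (k : V3) : V3 := ![k 0, k 1, 0]

/-- The lattice 𝒵_L of wavevectors. -/
def ZL (L₁ L₂ L₃ : ℝ) : Set V3 :=
  {k | ∃ n : Fin 3 → ℤ,
    k = ![2 * Real.pi * (n 0 : ℝ) / L₁, 2 * Real.pi * (n 1 : ℝ) / L₂,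
          2 * Real.pi * (n 2 : ℝ) / L₃]}

/-- Inertia–gravity frequency ω_k^s = s|k|/k₃. -/
def omg (k : V3) (s : ℝ) : ℝ := s * euclNorm k / k 2

/-- Slow eigenvector X_k^0. -/
def X0 (k : V3) : Fin 3 → ℂ :=
  if horiz k = 0 then ![0, 0, ((Real.sign (k 2) : ℝ) : ℂ)]
  else ![((k 1 / euclNorm k : ℝ) : ℂ), ((-(k 0) / euclNorm k : ℝ) : ℂ), ((k 2 / euclNorm k : ℝ) : ℂ)]

/-- Fast eigenvectors X_k^s, s = ±1. -/
def Xs (k : V3) (s : ℝ) : Fin 3 → ℂ :=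
  if horiz k = 0 then
    ![(((Real.sqrt 2)⁻¹ : ℝ) : ℂ), -Complex.I * s * (((Real.sqrt 2)⁻¹ : ℝ) : ℂ), 0]
  else
    ![(((-(k 1) * k 2 : ℝ) : ℂ) + Complex.I * s * k 0 * euclNorm k) /
        ((Real.sqrt 2 * euclNorm (horiz k) * euclNorm k : ℝ) : ℂ),
      (((k 0 * k 2 : ℝ) : ℂ) + Complex.I * s * k 1 * euclNorm k) /
        ((Real.sqrt 2 * euclNorm (horiz k) * euclNorm k : ℝ) : ℂ),
      ((euclNorm (horiz k) ^ 2 : ℝ) : ℂ) /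
        ((Real.sqrt 2 * euclNorm (horiz k) * euclNorm k : ℝ) : ℂ)]

/-- The incompressible-velocity vector V X_j^r. -/
def VX (j : V3) (r : ℝ) : Fin 3 → ℂ :=
  if horiz j = 0 then Xs j r
  else
    ![(((-(j 1) * j 2 : ℝ) : ℂ) + Complex.I * r * j 0 * euclNorm j) /
        ((Real.sqrt 2 * euclNorm j * euclNorm (horiz j) : ℝ) : ℂ),
      (((j 0 * j 2 : ℝ) : ℂ) + Complex.I * r * j 1 * euclNorm j) /
        ((Real.sqrt 2 * euclNorm j * euclNorm (horiz j) : ℝ) : ℂ),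
      (-Complex.I * r * ((euclNorm (horiz j) ^ 2 * euclNorm j / j 2 : ℝ) : ℂ)) /
        ((Real.sqrt 2 * euclNorm j * euclNorm (horiz j) : ℝ) : ℂ)]

/-- Bilinear pairing a·b on ℂ³. -/
def dotC (a b : Fin 3 → ℂ) : ℂ := a 0 * b 0 + a 1 * b 1 + a 2 * b 2

/-- Pairing of a complex vector with a real vector. -/
def dotR (a : Fin 3 → ℂ) (k : V3) : ℂ :=
  a 0 * (k 0 : ℂ) + a 1 * (k 1 : ℂ) + a 2 * (k 2 : ℂ)

/-- The interaction coefficient B_{jkl}^{rs0}. -/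
def Brs0 (M : ℝ) (j k l : V3) (r s : ℝ) : ℂ :=
  if j + k = l ∧ j 2 * k 2 ≠ 0 ∧ l ≠ 0 then
    Complex.I * M * dotR (VX j r) k * dotC (Xs k s) (X0 l)
  else 0

/-!
After clearing the normalisations of the eigenvectors, the two coefficients `B_{jkl}^{rs0}` and
`B_{kjl}^{sr0}` have the common denominator `2 |j| |k| |j'| |k'| |l| j₃ k₃`, and, using only
`r² = s² = 1` and `|k|² = |k'|² + k₃²`, the numerator of their sum factors as
`(r |j| k₃ + s |k| j₃) N = j₃ k₃ (ω_j^r + ω_k^s) N`. Elementary estimates give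
`|N| ≤ 7 |j'| |k'| |j|² |k|²`, and `7 ≤ 4 + 6 / (1 - θ₀²)`.
-/

open Complex

lemma euclNorm_nonneg (k : V3) : 0 ≤ euclNorm k := Real.sqrt_nonneg _

lemma euclNorm_sq (k : V3) : euclNorm k ^ 2 = k 0 ^ 2 + k 1 ^ 2 + k 2 ^ 2 :=
  Real.sq_sqrt (by positivity)

lemma euclNorm_horiz_sq (k : V3) : euclNorm (horiz k) ^ 2 = k 0 ^ 2 + k 1 ^ 2 := by
  simp [euclNorm_sq, horiz]

lemma euclNorm_sq_eq_horiz_sq_add (k : V3) :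
    euclNorm k ^ 2 = euclNorm (horiz k) ^ 2 + k 2 ^ 2 := by
  rw [euclNorm_sq, euclNorm_horiz_sq]

lemma euclNorm_horiz_le (k : V3) : euclNorm (horiz k) ≤ euclNorm k :=
  abs_le_of_sq_le_sq (by nlinarith [euclNorm_sq_eq_horiz_sq_add k]) (euclNorm_nonneg k)
    |>.trans' (le_abs_self _)

lemma abs_apply_two_le_euclNorm (k : V3) : |k 2| ≤ euclNorm k :=
  abs_le_of_sq_le_sq (by nlinarith [euclNorm_sq_eq_horiz_sq_add k]) (euclNorm_nonneg k)

lemma euclNorm_horiz_pos {k : V3} (h : horiz k ≠ 0) : 0 < euclNorm (horiz k) := by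
  have hpos : 0 < k 0 ^ 2 + k 1 ^ 2 := by
    by_contra! h0
    refine h (funext fun i => ?_)
    fin_cases i <;> simp [horiz] <;> nlinarith [sq_nonneg (k 0), sq_nonneg (k 1)]
  exact Real.sqrt_pos.2 (by simpa [horiz] using hpos)

lemma euclNorm_pos_of_horiz_ne_zero {k : V3} (h : horiz k ≠ 0) : 0 < euclNorm k :=
  (euclNorm_horiz_pos h).trans_le (euclNorm_horiz_le k)

lemma ne_zero_of_horiz_ne_zero {k : V3} (h : horiz k ≠ 0) : k ≠ 0 := by
  rintro rfl
  exact h (by ext i; fin_cases i <;> rfl)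

-- The paper's `j' ∧ k'` and `j' · k'`.
def hwedge (j k : V3) : ℝ := j 0 * k 1 - j 1 * k 0

def hdot (j k : V3) : ℝ := j 0 * k 0 + j 1 * k 1

lemma hwedge_comm (j k : V3) : hwedge k j = -hwedge j k := by unfold hwedge; ring

lemma hdot_comm (j k : V3) : hdot k j = hdot j k := by unfold hdot; ring

lemma hwedge_add_right (j k l : V3) : hwedge j (k + l) = hwedge j k + hwedge j l := by
  simp only [hwedge, Pi.add_apply]; ring

lemma hdot_add_right (j k l : V3) : hdot j (k + l) = hdot j k + hdot j l := by
  simp only [hdot, Pi.add_apply]; ring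

lemma hwedge_self (k : V3) : hwedge k k = 0 := by unfold hwedge; ring

lemma hdot_self (k : V3) : hdot k k = euclNorm (horiz k) ^ 2 := by
  rw [euclNorm_horiz_sq, hdot]; ring

lemma hwedge_sq_add_hdot_sq (j k : V3) :
    hwedge j k ^ 2 + hdot j k ^ 2 = euclNorm (horiz j) ^ 2 * euclNorm (horiz k) ^ 2 := by
  rw [euclNorm_horiz_sq, euclNorm_horiz_sq, hwedge, hdot]; ring

lemma abs_hwedge_le (j k : V3) : |hwedge j k| ≤ euclNorm (horiz j) * euclNorm (horiz k) :=
  abs_le_of_sq_le_sq (by nlinarith [hwedge_sq_add_hdot_sq j k, sq_nonneg (hdot j k)])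
    (mul_nonneg (euclNorm_nonneg _) (euclNorm_nonneg _))

lemma abs_hdot_le (j k : V3) : |hdot j k| ≤ euclNorm (horiz j) * euclNorm (horiz k) :=
  abs_le_of_sq_le_sq (by nlinarith [hwedge_sq_add_hdot_sq j k, sq_nonneg (hwedge j k)])
    (mul_nonneg (euclNorm_nonneg _) (euclNorm_nonneg _))

lemma dotR_VX {j : V3} (k : V3) (r : ℝ) (hj' : horiz j ≠ 0) (hj3 : j 2 ≠ 0) :
    dotR (VX j r) k =
      ((j 2 : ℂ) ^ 2 * hwedge j k +
          I * r * euclNorm j * (j 2 * hdot j k - (euclNorm (horiz j) : ℂ) ^ 2 * k 2)) /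
        (Real.sqrt 2 * euclNorm j * euclNorm (horiz j) * j 2) := by
  have : (euclNorm (horiz j) : ℂ) ≠ 0 := mod_cast (euclNorm_horiz_pos hj').ne'
  have : (euclNorm j : ℂ) ≠ 0 := mod_cast (euclNorm_pos_of_horiz_ne_zero hj').ne'
  have : (j 2 : ℂ) ≠ 0 := mod_cast hj3
  simp only [dotR, VX, if_neg hj', hwedge, hdot, Matrix.cons_val_zero, Matrix.cons_val_one,
    Matrix.cons_val_two, Matrix.head_cons, Matrix.tail_cons]
  push_cast
  field_simp
  ring

lemma dotC_Xs_X0 {k l : V3} (s : ℝ) (hk' : horiz k ≠ 0) (hl' : horiz l ≠ 0) :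
    dotC (Xs k s) (X0 l) =
      ((euclNorm (horiz k) : ℂ) ^ 2 * l 2 - k 2 * hdot k l + I * s * euclNorm k * hwedge k l) /
        (Real.sqrt 2 * euclNorm (horiz k) * euclNorm k * euclNorm l) := by
  have := euclNorm_horiz_pos hk'
  have := euclNorm_pos_of_horiz_ne_zero hk'
  have := euclNorm_pos_of_horiz_ne_zero hl'
  simp only [dotC, Xs, X0, if_neg hk', if_neg hl', hwedge, hdot, Matrix.cons_val_zero,
    Matrix.cons_val_one, Matrix.cons_val_two, Matrix.head_cons, Matrix.tail_cons]
  push_cast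
  field_simp
  ring

-- Read `x, y, J, K, a, b, w, p` as `j₃, k₃, |j|, |k|, |j'|, |k'|, j' ∧ k', j' · k'`.
theorem interaction_numerator_factor {R : Type*} [CommRing R] {I r s J K a b x y w p : R}
    (hI : I ^ 2 = -1) (hr : r ^ 2 = 1) (hs : s ^ 2 = 1)
    (hJ : J ^ 2 = a ^ 2 + x ^ 2) (hK : K ^ 2 = b ^ 2 + y ^ 2) :
    I * (y * (x ^ 2 * w + I * r * J * (x * p - a ^ 2 * y)) * (b ^ 2 * x - y * p - I * s * K * w) +
        x * (-(y ^ 2 * w) + I * s * K * (y * p - b ^ 2 * x)) *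
          (a ^ 2 * y - x * p + I * r * J * w)) =
      (r * J * y + s * K * x) *
        (w ^ 2 * x * y + (x * p - a ^ 2 * y) * (y * p - b ^ 2 * x) +
          I * (w * (r * J * x * b ^ 2 - s * K * y * a ^ 2))) := by
  linear_combination
    (-((r * J * y + s * K * x) * (x * y * w ^ 2 + (x * p - a ^ 2 * y) * (y * p - b ^ 2 * x)) +
      I * r * s * J * K * w * (b ^ 2 * x ^ 2 - a ^ 2 * y ^ 2))) * hI
    - I * w * x * y * b ^ 2 * hJ + I * w * x * y * a ^ 2 * hK
    - I * w * J ^ 2 * x * y * b ^ 2 * hr + I * w * K ^ 2 * x * y * a ^ 2 * hs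

def fastPairNumerator (j k : V3) (r s : ℝ) : ℂ :=
  ((hwedge j k ^ 2 * j 2 * k 2 +
      (j 2 * hdot j k - euclNorm (horiz j) ^ 2 * k 2) *
        (k 2 * hdot j k - euclNorm (horiz k) ^ 2 * j 2) : ℝ) : ℂ) +
    I * (hwedge j k * (r * euclNorm j * j 2 * euclNorm (horiz k) ^ 2 -
      s * euclNorm k * k 2 * euclNorm (horiz j) ^ 2) : ℝ)

lemma Brs0_add_Brs0_swap (M : ℝ) {j k : V3} {r s : ℝ} (hjk3 : j 2 * k 2 ≠ 0)
    (hj' : horiz j ≠ 0) (hk' : horiz k ≠ 0) (hl' : horiz (j + k) ≠ 0)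
    (hr : r ^ 2 = 1) (hs : s ^ 2 = 1) :
    Brs0 M j k (j + k) r s + Brs0 M k j (j + k) s r =
      ((M * (omg j r + omg k s) / (2 * euclNorm j * euclNorm k * euclNorm (horiz j) *
          euclNorm (horiz k) * euclNorm (j + k)) : ℝ) : ℂ) * fastPairNumerator j k r s := by
  have hj3 : j 2 ≠ 0 := left_ne_zero_of_mul hjk3
  have hk3 : k 2 ≠ 0 := right_ne_zero_of_mul hjk3
  have hl0 := ne_zero_of_horiz_ne_zero hl'
  rw [Brs0, if_pos ⟨rfl, hjk3, hl0⟩, Brs0, if_pos ⟨add_comm k j, by rwa [mul_comm], hl0⟩,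
    dotR_VX k r hj' hj3, dotR_VX j s hk' hk3, dotC_Xs_X0 s hk' hl', dotC_Xs_X0 r hj' hl']
  simp only [hwedge_add_right, hdot_add_right, hwedge_self, hdot_self, hwedge_comm j k,
    hdot_comm j k, Pi.add_apply]
  have key := interaction_numerator_factor (I := I) (r := (r : ℂ)) (s := (s : ℂ))
    (J := (euclNorm j : ℂ)) (K := (euclNorm k : ℂ)) (a := (euclNorm (horiz j) : ℂ))
    (b := (euclNorm (horiz k) : ℂ)) (x := (j 2 : ℂ)) (y := (k 2 : ℂ))
    (w := (hwedge j k : ℂ)) (p := (hdot j k : ℂ)) I_sq (mod_cast hr) (mod_cast hs)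
    (mod_cast euclNorm_sq_eq_horiz_sq_add j) (mod_cast euclNorm_sq_eq_horiz_sq_add k)
  have : (euclNorm (horiz j) : ℂ) ≠ 0 := mod_cast (euclNorm_horiz_pos hj').ne'
  have : (euclNorm j : ℂ) ≠ 0 := mod_cast (euclNorm_pos_of_horiz_ne_zero hj').ne'
  have : (euclNorm (horiz k) : ℂ) ≠ 0 := mod_cast (euclNorm_horiz_pos hk').ne'
  have : (euclNorm k : ℂ) ≠ 0 := mod_cast (euclNorm_pos_of_horiz_ne_zero hk').ne'
  have : (euclNorm (j + k) : ℂ) ≠ 0 := mod_cast (euclNorm_pos_of_horiz_ne_zero hl').ne'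
  have : (j 2 : ℂ) ≠ 0 := mod_cast hj3
  have : (k 2 : ℂ) ≠ 0 := mod_cast hk3
  have h2 : ((Real.sqrt 2 : ℝ) : ℂ) ^ 2 = 2 := mod_cast Real.sq_sqrt zero_le_two
  unfold omg fastPairNumerator
  push_cast
  -- with the `2` of the target written as `√2 ^ 2`, clearing denominators leaves `M * key`
  rw [← h2]
  field_simp
  linear_combination (M : ℂ) * key

lemma abs_mul_sub_sq_mul_le {a b J K x y p : ℝ} (ha0 : 0 ≤ a) (hJ0 : 0 ≤ J) (ha : a ≤ J)
    (hb : b ≤ K) (hx : |x| ≤ J) (hy : |y| ≤ K) (hp : |p| ≤ a * b) :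
    |x * p - a ^ 2 * y| ≤ 2 * a * J * K := by
  have hxp : |x| * |p| ≤ J * (a * K) :=
    mul_le_mul hx (hp.trans (mul_le_mul_of_nonneg_left hb ha0)) (abs_nonneg _) hJ0
  have hay : a ^ 2 * |y| ≤ a * J * K := by
    rw [sq]
    exact mul_le_mul (mul_le_mul_of_nonneg_left ha ha0) hy (abs_nonneg _) (mul_nonneg ha0 hJ0)
  calc |x * p - a ^ 2 * y| ≤ |x| * |p| + a ^ 2 * |y| :=
        (abs_sub _ _).trans_eq (by rw [abs_mul, abs_mul, abs_of_nonneg (sq_nonneg a)])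
    _ ≤ 2 * a * J * K := by linarith

lemma norm_fastPairNumerator_le (j k : V3) {r s : ℝ} (hr : |r| ≤ 1) (hs : |s| ≤ 1) :
    ‖fastPairNumerator j k r s‖ ≤
      7 * (euclNorm (horiz j) * euclNorm (horiz k)) * (euclNorm j * euclNorm k) ^ 2 := by
  set a := euclNorm (horiz j)
  set b := euclNorm (horiz k)
  set J := euclNorm j
  set K := euclNorm k
  set w := hwedge j k
  set p := hdot j k
  have ha0 : 0 ≤ a := euclNorm_nonneg _
  have hb0 : 0 ≤ b := euclNorm_nonneg _
  have ha : a ≤ J := euclNorm_horiz_le j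
  have hb : b ≤ K := euclNorm_horiz_le k
  have hJ0 : 0 ≤ J := ha0.trans ha
  have hK0 : 0 ≤ K := hb0.trans hb
  have hx : |j 2| ≤ J := abs_apply_two_le_euclNorm j
  have hy : |k 2| ≤ K := abs_apply_two_le_euclNorm k
  have hw : |w| ≤ a * b := abs_hwedge_le j k
  have hab0 : 0 ≤ a * b := mul_nonneg ha0 hb0
  have hab : a * b ≤ J * K := mul_le_mul ha hb hb0 hJ0
  have hA : |j 2 * p - a ^ 2 * k 2| ≤ 2 * a * J * K :=
    abs_mul_sub_sq_mul_le ha0 hJ0 ha hb hx hy (abs_hdot_le j k)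
  have hB : |k 2 * p - b ^ 2 * j 2| ≤ 2 * b * K * J :=
    abs_mul_sub_sq_mul_le hb0 hK0 hb ha hy hx ((abs_hdot_le j k).trans_eq (mul_comm a b))
  have hP : |w ^ 2 * j 2 * k 2 + (j 2 * p - a ^ 2 * k 2) * (k 2 * p - b ^ 2 * j 2)| ≤
      5 * (a * b) * (J * K) ^ 2 := by
    have hw2 : |w| ^ 2 ≤ (a * b) * (J * K) := by
      rw [sq]
      exact (mul_le_mul hw hw (abs_nonneg w) hab0).trans (mul_le_mul_of_nonneg_left hab hab0)
    calc _ ≤ |w ^ 2 * j 2 * k 2| + |(j 2 * p - a ^ 2 * k 2) * (k 2 * p - b ^ 2 * j 2)| :=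
          abs_add_le _ _
      _ = |w| ^ 2 * (|j 2| * |k 2|) +
            |j 2 * p - a ^ 2 * k 2| * |k 2 * p - b ^ 2 * j 2| := by
          rw [abs_mul, abs_mul, abs_mul, abs_pow, mul_assoc]
      _ ≤ (a * b * (J * K)) * (J * K) + (2 * a * J * K) * (2 * b * K * J) := by gcongr
      _ = 5 * (a * b) * (J * K) ^ 2 := by ring
  have hQ : |w * (r * J * j 2 * b ^ 2 - s * K * k 2 * a ^ 2)| ≤ 2 * (a * b) * (J * K) ^ 2 :=
    calc _ ≤ |w| * (|r| * J * |j 2| * b ^ 2 + |s| * K * |k 2| * a ^ 2) := by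
          rw [abs_mul]
          gcongr
          exact (abs_sub _ _).trans_eq (by
            simp only [abs_mul, abs_pow, abs_of_nonneg hJ0, abs_of_nonneg hK0, abs_of_nonneg ha0,
              abs_of_nonneg hb0])
      _ ≤ (a * b) * (1 * J * J * K ^ 2 + 1 * K * K * J ^ 2) := by gcongr
      _ = 2 * (a * b) * (J * K) ^ 2 := by ring
  calc ‖fastPairNumerator j k r s‖
      ≤ |w ^ 2 * j 2 * k 2 + (j 2 * p - a ^ 2 * k 2) * (k 2 * p - b ^ 2 * j 2)| +
          |w * (r * J * j 2 * b ^ 2 - s * K * k 2 * a ^ 2)| := by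
        unfold fastPairNumerator
        refine (norm_add_le _ _).trans_eq ?_
        rw [norm_mul, Complex.norm_I, one_mul, Complex.norm_real, Complex.norm_real,
          Real.norm_eq_abs, Real.norm_eq_abs]
    _ ≤ 7 * (a * b) * (J * K) ^ 2 := by linarith

lemma norm_Brs0_add_Brs0_swap_le {M : ℝ} (hM : 0 ≤ M) {j k : V3} {r s : ℝ}
    (hjk3 : j 2 * k 2 ≠ 0) (hj' : horiz j ≠ 0) (hk' : horiz k ≠ 0) (hl' : horiz (j + k) ≠ 0)
    (hr : r ^ 2 = 1) (hs : s ^ 2 = 1) :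
    ‖Brs0 M j k (j + k) r s + Brs0 M k j (j + k) s r‖ ≤
      M / 2 * 7 * (euclNorm j * euclNorm k / euclNorm (j + k)) * |omg j r + omg k s| := by
  have ha := euclNorm_horiz_pos hj'
  have hb := euclNorm_horiz_pos hk'
  have hJ := euclNorm_pos_of_horiz_ne_zero hj'
  have hK := euclNorm_pos_of_horiz_ne_zero hk'
  have hL := euclNorm_pos_of_horiz_ne_zero hl'
  have hD : 0 < 2 * euclNorm j * euclNorm k * euclNorm (horiz j) * euclNorm (horiz k) *
      euclNorm (j + k) := by positivity
  rw [Brs0_add_Brs0_swap M hjk3 hj' hk' hl' hr hs, norm_mul, Complex.norm_real,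
    Real.norm_eq_abs, abs_div, abs_mul, abs_of_nonneg hM, abs_of_pos hD]
  refine (mul_le_mul_of_nonneg_left (norm_fastPairNumerator_le j k
    ((sq_le_one_iff_abs_le_one r).1 hr.le) ((sq_le_one_iff_abs_le_one s).1 hs.le))
    (div_nonneg (mul_nonneg hM (abs_nonneg _)) hD.le)).trans_eq ?_
  field_simp

theorem near_resonance_generic_general
    (θ₀ : ℝ) (hθ0 : 0 < θ₀) (hθ1 : θ₀ < 1)
    (L₁ L₂ L₃ : ℝ) (hL₁ : 0 < L₁) (hL₂ : 0 < L₂) (hL₃ : 0 < L₃)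
    (j k l : V3)
    (hjk3 : j 2 * k 2 ≠ 0) (hj' : horiz j ≠ 0) (hk' : horiz k ≠ 0)
    (hlsum : l = j + k) (hl' : horiz l ≠ 0)
    (r s : ℝ) (hr : r = 1 ∨ r = -1) (hs : s = 1 ∨ s = -1) :
    ‖Brs0 (L₁ * L₂ * L₃) j k l r s + Brs0 (L₁ * L₂ * L₃) k j l s r‖ ≤
      (L₁ * L₂ * L₃) / 2 * (4 + 6 / (1 - θ₀ ^ 2)) *
        (euclNorm j * euclNorm k / euclNorm l) * |omg j r + omg k s| := by
  subst hlsum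
  have hr2 : r ^ 2 = 1 := by rcases hr with rfl | rfl <;> norm_num
  have hs2 : s ^ 2 = 1 := by rcases hs with rfl | rfl <;> norm_num
  have hconst : 7 ≤ 4 + 6 / (1 - θ₀ ^ 2) := by
    have hθ : 0 < 1 - θ₀ ^ 2 := by nlinarith
    rw [← sub_le_iff_le_add', le_div_iff₀ hθ]
    nlinarith
  have hJ := euclNorm_pos_of_horiz_ne_zero hj'
  have hK := euclNorm_pos_of_horiz_ne_zero hk'
  have hL := euclNorm_pos_of_horiz_ne_zero hl'
  calc _ ≤ L₁ * L₂ * L₃ / 2 * 7 * (euclNorm j * euclNorm k / euclNorm (j + k)) *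
        |omg j r + omg k s| :=
      norm_Brs0_add_Brs0_swap_le (by positivity) hjk3 hj' hk' hl' hr2 hs2
    _ ≤ _ := by gcongr

/-- near-resonance bound in the generic case (eq. (A.10)). -/
theorem near_resonance_generic
    (θ₀ : ℝ) (hθ0 : 0 < θ₀) (hθ1 : θ₀ < 1)
    (L₁ L₂ L₃ : ℝ) (hL₁ : 0 < L₁) (hL₂ : 0 < L₂) (hL₃ : 0 < L₃)
    (j k l : V3) (hj : j ∈ ZL L₁ L₂ L₃) (hk : k ∈ ZL L₁ L₂ L₃) (hl : l ∈ ZL L₁ L₂ L₃)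
    (hjk3 : j 2 * k 2 ≠ 0) (hj' : horiz j ≠ 0) (hk' : horiz k ≠ 0)
    (hlsum : l = j + k) (hl' : horiz l ≠ 0)
    (r s : ℝ) (hr : r = 1 ∨ r = -1) (hs : s = 1 ∨ s = -1)
    (hnear : |omg j r + omg k s| ≤ θ₀ * |omg j r - omg k s|) :
    ‖Brs0 (L₁ * L₂ * L₃) j k l r s + Brs0 (L₁ * L₂ * L₃) k j l s r‖ ≤
      (L₁ * L₂ * L₃) / 2 * (4 + 6 / (1 - θ₀ ^ 2)) *
        (euclNorm j * euclNorm k / euclNorm l) * |omg j r + omg k s| :=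
  near_resonance_generic_general θ₀ hθ0 hθ1 L₁ L₂ L₃ hL₁ hL₂ hL₃ j k l hjk3 hj' hk' hlsum hl' r s hr
    hs
end
end

section
/- Let ε > 0, μ > 0 and F₀, F₁ ≥ 0. Let f : ℝ → ℂ be differentiable with |f(t)| ≤ F₀ and |f′(t)| ≤ F₁ for all t ≥ 0, and let x : ℝ → ℂ be differentiable and satisfy x′(t) + (i/ε) x(t) + μ x(t) = f(t) for all t ≥ 0. Then for all t ≥ 0, |x(t)| ≤ e^{−μt} |x(0)| + ε (2F₀ + F₁/μ). In particular, x eventually decays to a size of order ε, uniformly in the high-frequency parameter 1/ε. -/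
/-!
With `c = i/ε + μ`, the deviation `y = x - f/c` from the slowly varying state `f/c` solves
`y' + c y = -f'/c`, whose forcing is `O(ε)` because `‖c‖ ≥ |Im c| = 1/ε`. For `y' + c y = g` with
`Re c > 0`, the function `e^{ct} y(t)` has derivative `e^{ct} g(t)`, of norm at most
`e^{(Re c) t} sup ‖g‖`; comparing with `‖y 0‖ + e^{(Re c) t} sup ‖g‖ / Re c` gives
`‖y t‖ ≤ e^{-(Re c) t} ‖y 0‖ + sup ‖g‖ / Re c`, with no dependence on `Im c`.
-/

noncomputable section

open Complex

theorem hasDerivAt_cexp_mul_ofReal (c : ℂ) (s : ℝ) :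
    HasDerivAt (fun u : ℝ => exp (c * u)) (exp (c * s) * c) s := by
  simpa using ((hasDerivAt_id s).ofReal_comp.const_mul c).cexp

section DampedLinearODE

variable {E : Type*} [NormedAddCommGroup E] [NormedSpace ℂ E]

theorem norm_cexp_mul_ofReal_smul (c : ℂ) (s : ℝ) (v : E) :
    ‖exp (c * s) • v‖ = Real.exp (c.re * s) * ‖v‖ := by
  rw [norm_smul, norm_exp, re_mul_ofReal]

theorem norm_le_of_hasDerivAt_eq_sub_smul {y g : ℝ → E} {c : ℂ} {G : ℝ} (hc : 0 < c.re)
    (hy : ∀ t, 0 ≤ t → HasDerivAt y (g t - c • y t) t) (hg : ∀ t, 0 ≤ t → ‖g t‖ ≤ G)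
    {t : ℝ} (ht : 0 ≤ t) :
    ‖y t‖ ≤ Real.exp (-c.re * t) * ‖y 0‖ + G / c.re := by
  set μ := c.re
  set z : ℝ → E := fun s => exp (c * s) • y s
  have hz : ∀ s : ℝ, 0 ≤ s → HasDerivAt z (exp (c * s) • g s) s := fun s hs => by
    convert (hasDerivAt_cexp_mul_ofReal c s).smul (hy s hs) using 1
    · rfl
    rw [smul_sub, mul_smul]
    abel
  set B : ℝ → ℝ := fun s => ‖y 0‖ + G / μ * Real.exp (μ * s)
  have hB : ∀ s, HasDerivAt B (G * Real.exp (μ * s)) s := fun s => by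
    refine ((((hasDerivAt_id s).const_mul μ).exp.const_mul (G / μ)).const_add ‖y 0‖).congr_deriv ?_
    simp only [id]
    field_simp
  have hG : 0 ≤ G := (norm_nonneg _).trans (hg 0 le_rfl)
  have hz_le : ‖z t‖ ≤ B t := by
    refine image_norm_le_of_norm_deriv_right_le_deriv_boundary
      (fun s hs => (hz s hs.1).continuousAt.continuousWithinAt)
      (fun s hs => (hz s hs.1).hasDerivWithinAt) ?_ hB (fun s hs => ?_) ⟨ht, le_rfl⟩
    · simp [z, B]
      positivity
    · rw [norm_cexp_mul_ofReal_smul, mul_comm]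
      exact mul_le_mul_of_nonneg_right (hg s hs.1) (Real.exp_nonneg _)
  have hz_norm : ‖z t‖ = Real.exp (μ * t) * ‖y t‖ := norm_cexp_mul_ofReal_smul c t (y t)
  calc ‖y t‖ = Real.exp (-μ * t) * ‖z t‖ := by
        rw [hz_norm, ← mul_assoc, ← Real.exp_add]; simp
    _ ≤ Real.exp (-μ * t) * B t := mul_le_mul_of_nonneg_left hz_le (Real.exp_nonneg _)
    _ = Real.exp (-μ * t) * ‖y 0‖ + G / μ := by
        simp only [B, mul_add]
        rw [mul_left_comm, ← Real.exp_add]; simp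

end DampedLinearODE

theorem norm_inv_I_div_add_ofReal_le {ε : ℝ} (hε : 0 < ε) (μ : ℝ) :
    ‖(I / ε + μ)⁻¹‖ ≤ ε := by
  rw [norm_inv]
  refine inv_le_of_inv_le₀ hε ?_
  calc ε⁻¹ = |(I / ε + μ).im| := by
        rw [add_im, div_ofReal_im, I_im, ofReal_im, add_zero, one_div, abs_of_pos (inv_pos.2 hε)]
    _ ≤ ‖I / ε + μ‖ := abs_im_le_norm _

theorem fast_oscillator_decay_general
    (ε μ F₀ F₁ : ℝ) (hε : 0 < ε) (hμ : 0 < μ)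
    (f x : ℝ → ℂ) (hf : Differentiable ℝ f) (hx : Differentiable ℝ x)
    (hfb : ∀ t : ℝ, 0 ≤ t → ‖f t‖ ≤ F₀)
    (hfd : ∀ t : ℝ, 0 ≤ t → ‖deriv f t‖ ≤ F₁)
    (hode : ∀ t : ℝ, 0 ≤ t →
      deriv x t + (Complex.I / (ε : ℂ)) * x t + (μ : ℂ) * x t = f t) :
    ∀ t : ℝ, 0 ≤ t →
      ‖x t‖ ≤
        Real.exp (-μ * t) * ‖x 0‖ + ε * (2 * F₀ + F₁ / μ) := by
  intro t ht
  set c : ℂ := I / ε + μ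
  have hc_re : c.re = μ := by simp [c]
  have hc : c ≠ 0 := fun h => hμ.ne (by simpa [h] using hc_re)
  have norm_div_c_le {w : ℂ} {F : ℝ} (hw : ‖w‖ ≤ F) : ‖w / c‖ ≤ F * ε := by
    rw [div_eq_mul_inv, norm_mul]
    exact mul_le_mul hw (norm_inv_I_div_add_ofReal_le hε μ) (norm_nonneg _)
      ((norm_nonneg _).trans hw)
  set y : ℝ → ℂ := fun s => x s - f s / c
  have hy (s : ℝ) (hs : 0 ≤ s) : HasDerivAt y (-(deriv f s / c) - c • y s) s := by
    refine ((hx s).hasDerivAt.sub ((hf s).hasDerivAt.div_const c)).congr_deriv ?_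
    rw [smul_eq_mul, mul_sub, mul_div_cancel₀ _ hc]
    linear_combination hode s hs
  have hy_le : ‖y t‖ ≤ Real.exp (-μ * t) * ‖y 0‖ + F₁ * ε / μ := by
    simpa only [hc_re] using norm_le_of_hasDerivAt_eq_sub_smul (hc_re ▸ hμ) hy
      (fun s hs => (norm_neg _).trans_le (norm_div_c_le (hfd s hs))) ht
  have hy0 : ‖y 0‖ ≤ ‖x 0‖ + F₀ * ε :=
    (norm_sub_le _ _).trans (add_le_add le_rfl (norm_div_c_le (hfb 0 le_rfl)))
  have hF₀ε : 0 ≤ F₀ * ε := mul_nonneg ((norm_nonneg _).trans (hfb 0 le_rfl)) hε.le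
  have hdecay : Real.exp (-μ * t) ≤ 1 := Real.exp_le_one_iff.2 (by nlinarith)
  calc ‖x t‖ = ‖y t + f t / c‖ := by simp [y]
    _ ≤ ‖y t‖ + F₀ * ε := (norm_add_le _ _).trans (add_le_add le_rfl (norm_div_c_le (hfb t ht)))
    _ ≤ Real.exp (-μ * t) * (‖x 0‖ + F₀ * ε) + F₁ * ε / μ + F₀ * ε := by
        gcongr
        exact hy_le.trans (by gcongr)
    _ ≤ Real.exp (-μ * t) * ‖x 0‖ + F₀ * ε + F₁ * ε / μ + F₀ * ε := by
        linarith [mul_le_of_le_one_left hF₀ε hdecay]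
    _ = Real.exp (-μ * t) * ‖x 0‖ + ε * (2 * F₀ + F₁ / μ) := by ring

/-- geostrophic decay for the one-dimensional damped
fast-oscillator model x′ + (i/ε)x + μx = f. -/
theorem fast_oscillator_decay
    (ε μ F₀ F₁ : ℝ) (hε : 0 < ε) (hμ : 0 < μ) (hF₀ : 0 ≤ F₀) (hF₁ : 0 ≤ F₁)
    (f x : ℝ → ℂ) (hf : Differentiable ℝ f) (hx : Differentiable ℝ x)
    (hfb : ∀ t : ℝ, 0 ≤ t → ‖f t‖ ≤ F₀)
    (hfd : ∀ t : ℝ, 0 ≤ t → ‖deriv f t‖ ≤ F₁)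
    (hode : ∀ t : ℝ, 0 ≤ t →
      deriv x t + (Complex.I / (ε : ℂ)) * x t + (μ : ℂ) * x t = f t) :
    ∀ t : ℝ, 0 ≤ t →
      ‖x t‖ ≤
        Real.exp (-μ * t) * ‖x 0‖ + ε * (2 * F₀ + F₁ / μ) :=
  fast_oscillator_decay_general ε μ F₀ F₁ hε hμ f x hf hx hfb hfd hode
end
end
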